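/- For every p ∈ P^G there exists a unique z(p) ∈ ℝ^N with ĝ_n(z(p)_n) = p_n/(1 − Σ_{l=1}^N p_l) for all n, and this z(p) satisfies p_n = ĝ_n(z(p)_n)/(1 + Σ_{l=1}^N ĝ_l(z(p)_l)) for all n. Moreover, the function p ↦ Σ_{n=1}^N p_n·z(p)_n is strictly concave on P^G. -/

import Mathlib

/-!
Since the price sensitivities are constant on each block, homogeneity gives
`G^n(Y^n | z, a, b) = K(a, b) e^{-βz}` with `K > 0` (Euler's identity and `∂G^n/∂Y_i > 0`).
So `log ĝ_n` is the lower envelope of the compact family of lines `z ↦ log K - βz`, `β > 0`: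
it is continuous, strictly decreasing and onto `ℝ`, and `z(p)_n` is its inverse at
`log (p_n / p_0)`, `p_0 = 1 - Σ_l p_l`.

For strict concavity let `r = a p + b q` and take a line of the envelope touching it at `z(r)_n`.
Comparing `z(p)_n` and `z(q)_n` with that line bounds the concavity gap of `p ↦ p_n z(p)_n` from
below by the gap in the log-sum inequality for `(x, y) ↦ x log (x / y)` at `(a p_n, a p_0)` and
`(b q_n, b q_0)`, which is positive unless `p_n / p_0 = q_n / q_0`; when `p ≠ q` this fails for
some `n`.
-/

/-- `G^n(Y^n | z, a^n, b^n) = G^n((exp(a_i − b_i (z + c_i)))_{i ∈ V_n})` where the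
partition `V_n = {i | part i = n}`. -/
noncomputable def GzP (m N : ℕ) (part : Fin m → Fin N)
    (Gn : ∀ n : Fin N, ({i : Fin m // part i = n} → ℝ) → ℝ)
    (c : Fin m → ℝ) (n : Fin N) (z : ℝ)
    (ab : ({i : Fin m // part i = n} → ℝ) × ({i : Fin m // part i = n} → ℝ)) : ℝ :=
  Gn n fun i => Real.exp (ab.1 i - ab.2 i * (z + c i.1))

/-- `ĝ_n(z) = min_{(a^n, b^n) ∈ A^n} G^n(Y^n | z, a^n, b^n)`. -/
noncomputable def ghatP (m N : ℕ) (part : Fin m → Fin N)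
    (Gn : ∀ n : Fin N, ({i : Fin m // part i = n} → ℝ) → ℝ)
    (c : Fin m → ℝ)
    (An : ∀ n : Fin N,
      Set (({i : Fin m // part i = n} → ℝ) × ({i : Fin m // part i = n} → ℝ)))
    (n : Fin N) (z : ℝ) : ℝ :=
  sInf (GzP m N part Gn c n z '' An n)

open Real Set Filter Topology

noncomputable def lowerEnvelope (S : Set (ℝ × ℝ)) (z : ℝ) : ℝ :=
  sInf ((fun x : ℝ × ℝ => x.1 - x.2 * z) '' S)

section LowerEnvelope

variable {S : Set (ℝ × ℝ)}

lemma lowerEnvelope_le (hS : IsCompact S) {x : ℝ × ℝ} (hx : x ∈ S) (z : ℝ) :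
    lowerEnvelope S z ≤ x.1 - x.2 * z :=
  csInf_le (hS.image (by fun_prop)).bddBelow (mem_image_of_mem _ hx)

lemma exists_mem_lowerEnvelope_eq (hS : IsCompact S) (hne : S.Nonempty) (z : ℝ) :
    ∃ x ∈ S, lowerEnvelope S z = x.1 - x.2 * z := by
  obtain ⟨x, hx, hxz⟩ :=
    (hS.image (f := fun x : ℝ × ℝ => x.1 - x.2 * z) (by fun_prop)).sInf_mem (hne.image _)
  exact ⟨x, hx, hxz.symm⟩

lemma lowerEnvelope_strictAnti (hS : IsCompact S) (hne : S.Nonempty)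
    (hpos : ∀ x ∈ S, 0 < x.2) : StrictAnti (lowerEnvelope S) := by
  intro z w hzw
  obtain ⟨x, hx, hxz⟩ := exists_mem_lowerEnvelope_eq hS hne z
  calc lowerEnvelope S w ≤ x.1 - x.2 * w := lowerEnvelope_le hS hx w
    _ < x.1 - x.2 * z := by nlinarith [hpos x hx]
    _ = lowerEnvelope S z := hxz.symm

lemma continuous_lowerEnvelope (hS : IsCompact S) : Continuous (lowerEnvelope S) :=
  hS.continuous_sInf (f := fun z (x : ℝ × ℝ) => x.1 - x.2 * z) (by fun_prop)

lemma lowerEnvelope_surjective (hS : IsCompact S) (hne : S.Nonempty)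
    (hpos : ∀ x ∈ S, 0 < x.2) : Function.Surjective (lowerEnvelope S) := by
  obtain ⟨x₀, hx₀⟩ := hne
  obtain ⟨L, hL⟩ := (hS.image continuous_fst).bddBelow
  obtain ⟨y, hy, hymin⟩ := hS.exists_isMinOn ⟨x₀, hx₀⟩ continuous_snd.continuousOn
  refine (continuous_lowerEnvelope hS).surjective' ?_ ?_
  · have hline : Tendsto (fun z => L + -y.2 * z) atBot atTop :=
      tendsto_atTop_add_const_left _ _
        (tendsto_id.const_mul_atBot_of_neg (by linarith [hpos y hy]))
    refine tendsto_atTop_mono' _ ?_ hline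
    filter_upwards [eventually_le_atBot 0] with z hz
    obtain ⟨x, hx, hxz⟩ := exists_mem_lowerEnvelope_eq hS ⟨x₀, hx₀⟩ z
    have hLx : L ≤ x.1 := hL (mem_image_of_mem _ hx)
    have hyx : y.2 ≤ x.2 := hymin hx
    rw [hxz]
    nlinarith
  · have hline : Tendsto (fun z => x₀.1 + -x₀.2 * z) atTop atBot :=
      tendsto_atBot_add_const_left _ _
        (tendsto_id.const_mul_atTop_of_neg (by linarith [hpos x₀ hx₀]))
    refine tendsto_atBot_mono (fun z => ?_) hline
    linarith [lowerEnvelope_le hS hx₀ z]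

end LowerEnvelope

lemma mediant_eq_weighted_avg {x₁ x₂ y₁ y₂ : ℝ} (hy₁ : 0 < y₁) (hy₂ : 0 < y₂) :
    y₁ / (y₁ + y₂) * (x₁ / y₁) + y₂ / (y₁ + y₂) * (x₂ / y₂) = (x₁ + x₂) / (y₁ + y₂) := by
  field_simp

lemma add_mul_log_div_add_le {x₁ x₂ y₁ y₂ : ℝ} (hx₁ : 0 ≤ x₁) (hx₂ : 0 ≤ x₂)
    (hy₁ : 0 < y₁) (hy₂ : 0 < y₂) :
    (x₁ + x₂) * log ((x₁ + x₂) / (y₁ + y₂)) ≤ x₁ * log (x₁ / y₁) + x₂ * log (x₂ / y₂) := by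
  have hy : 0 < y₁ + y₂ := by positivity
  have h := convexOn_mul_log.2 (mem_Ici.2 (by positivity : 0 ≤ x₁ / y₁))
    (mem_Ici.2 (by positivity : 0 ≤ x₂ / y₂)) (by positivity : 0 ≤ y₁ / (y₁ + y₂))
    (by positivity : 0 ≤ y₂ / (y₁ + y₂)) (by field_simp)
  simp only [smul_eq_mul, mediant_eq_weighted_avg hy₁ hy₂] at h
  calc (x₁ + x₂) * log ((x₁ + x₂) / (y₁ + y₂))
      = (y₁ + y₂) * ((x₁ + x₂) / (y₁ + y₂) * log ((x₁ + x₂) / (y₁ + y₂))) := by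
        field_simp
    _ ≤ (y₁ + y₂) * (y₁ / (y₁ + y₂) * (x₁ / y₁ * log (x₁ / y₁)) +
        y₂ / (y₁ + y₂) * (x₂ / y₂ * log (x₂ / y₂))) := mul_le_mul_of_nonneg_left h hy.le
    _ = x₁ * log (x₁ / y₁) + x₂ * log (x₂ / y₂) := by field_simp

lemma add_mul_log_div_add_lt {x₁ x₂ y₁ y₂ : ℝ} (hx₁ : 0 ≤ x₁) (hx₂ : 0 ≤ x₂)
    (hy₁ : 0 < y₁) (hy₂ : 0 < y₂) (hne : x₁ / y₁ ≠ x₂ / y₂) :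
    (x₁ + x₂) * log ((x₁ + x₂) / (y₁ + y₂)) < x₁ * log (x₁ / y₁) + x₂ * log (x₂ / y₂) := by
  have hy : 0 < y₁ + y₂ := by positivity
  have h := strictConvexOn_mul_log.2 (mem_Ici.2 (by positivity : 0 ≤ x₁ / y₁))
    (mem_Ici.2 (by positivity : 0 ≤ x₂ / y₂)) hne (by positivity : 0 < y₁ / (y₁ + y₂))
    (by positivity : 0 < y₂ / (y₁ + y₂)) (by field_simp)
  simp only [smul_eq_mul, mediant_eq_weighted_avg hy₁ hy₂] at h
  calc (x₁ + x₂) * log ((x₁ + x₂) / (y₁ + y₂))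
      = (y₁ + y₂) * ((x₁ + x₂) / (y₁ + y₂) * log ((x₁ + x₂) / (y₁ + y₂))) := by
        field_simp
    _ < (y₁ + y₂) * (y₁ / (y₁ + y₂) * (x₁ / y₁ * log (x₁ / y₁)) +
        y₂ / (y₁ + y₂) * (x₂ / y₂ * log (x₂ / y₂))) := mul_lt_mul_of_pos_left h hy
    _ = x₁ * log (x₁ / y₁) + x₂ * log (x₂ / y₂) := by field_simp

lemma eq_div_one_add_sum_div {ι : Type*} [Fintype ι] {p : ι → ℝ} (hp : ∑ l, p l < 1) (n : ι) :
    p n = p n / (1 - ∑ l, p l) / (1 + ∑ l, p l / (1 - ∑ l', p l')) := by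
  have h0 : 1 - ∑ l, p l ≠ 0 := by linarith
  rw [← Finset.sum_div]
  field_simp
  ring

lemma eq_of_div_one_sub_sum_eq {ι : Type*} [Fintype ι] {p q : ι → ℝ} (hp : ∑ l, p l < 1)
    (hq : ∑ l, q l < 1) (h : ∀ n, p n / (1 - ∑ l, p l) = q n / (1 - ∑ l, q l)) : p = q := by
  funext n
  rw [eq_div_one_add_sum_div hp n, eq_div_one_add_sum_div hq n]
  simp only [h]

lemma mul_sub_le_of_supporting_line {φ : ℝ → ℝ} {L β zr : ℝ} (hzr : φ zr = L - β * zr)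
    (hsupp : ∀ w, φ w ≤ L - β * w) {u v : ℝ} (hu : 0 ≤ u) (hv : 0 ≤ v) (zu zv : ℝ) :
    u * φ zu + v * φ zv - (u + v) * φ zr ≤ β * ((u + v) * zr - (u * zu + v * zv)) := by
  nlinarith [mul_le_mul_of_nonneg_left (hsupp zu) hu, mul_le_mul_of_nonneg_left (hsupp zv) hv]

lemma lowerEnvelope_concavity_gap {S : Set (ℝ × ℝ)} (hS : IsCompact S) (hne : S.Nonempty)
    (hpos : ∀ x ∈ S, 0 < x.2) {a b p q p₀ q₀ zp zq zr : ℝ} (ha : 0 < a) (hb : 0 < b)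
    (hp : 0 < p) (hq : 0 < q) (hp₀ : 0 < p₀) (hq₀ : 0 < q₀)
    (hzp : lowerEnvelope S zp = log (p / p₀)) (hzq : lowerEnvelope S zq = log (q / q₀))
    (hzr : lowerEnvelope S zr = log ((a * p + b * q) / (a * p₀ + b * q₀))) :
    a * (p * zp) + b * (q * zq) ≤ (a * p + b * q) * zr ∧
      (p / p₀ ≠ q / q₀ → a * (p * zp) + b * (q * zq) < (a * p + b * q) * zr) := by
  obtain ⟨x, hx, hxzr⟩ := exists_mem_lowerEnvelope_eq hS hne zr
  have hgap := mul_sub_le_of_supporting_line hxzr (lowerEnvelope_le hS hx)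
    (mul_pos ha hp).le (mul_pos hb hq).le zp zq
  rw [hzp, hzq, hzr] at hgap
  have hratio : ∀ {c x y : ℝ}, 0 < c → c * x / (c * y) = x / y := fun hc =>
    mul_div_mul_left _ _ hc.ne'
  have hlogsum_le := add_mul_log_div_add_le (mul_pos ha hp).le (mul_pos hb hq).le
    (mul_pos ha hp₀) (mul_pos hb hq₀)
  rw [hratio ha, hratio hb] at hlogsum_le
  have hβ := hpos x hx
  refine ⟨?_, fun hne => ?_⟩
  · nlinarith
  · have hlogsum_lt := add_mul_log_div_add_lt (mul_pos ha hp).le (mul_pos hb hq).le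
      (mul_pos ha hp₀) (mul_pos hb hq₀) (by rwa [hratio ha, hratio hb])
    rw [hratio ha, hratio hb] at hlogsum_lt
    nlinarith

section Simplex

variable {ι : Type*} [Fintype ι]

lemma sum_smul_add_smul (a b : ℝ) (p q : ι → ℝ) :
    ∑ n, (a • p + b • q) n = a * ∑ n, p n + b * ∑ n, q n := by
  simp only [Pi.add_apply, Pi.smul_apply, smul_eq_mul, Finset.sum_add_distrib, Finset.mul_sum]

lemma convex_openSimplex : Convex ℝ {p : ι → ℝ | (∀ n, 0 < p n) ∧ ∑ n, p n < 1} := by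
  rintro p ⟨hp, hp1⟩ q ⟨hq, hq1⟩ a b ha hb hab
  refine ⟨fun n => convex_Ioi (0 : ℝ) (hp n) (hq n) ha hb hab, ?_⟩
  rw [sum_smul_add_smul]
  exact convex_Iio (1 : ℝ) hp1 hq1 ha hb hab

theorem strictConcaveOn_sum_mul_of_lowerEnvelope_eq_log {S : ι → Set (ℝ × ℝ)}
    (hS : ∀ n, IsCompact (S n)) (hne : ∀ n, (S n).Nonempty) (hpos : ∀ n, ∀ x ∈ S n, 0 < x.2)
    {Z : (ι → ℝ) → ι → ℝ}
    (hZ : ∀ p ∈ {p : ι → ℝ | (∀ n, 0 < p n) ∧ ∑ n, p n < 1},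
      ∀ n, lowerEnvelope (S n) (Z p n) = log (p n / (1 - ∑ l, p l))) :
    StrictConcaveOn ℝ {p : ι → ℝ | (∀ n, 0 < p n) ∧ ∑ n, p n < 1}
      (fun p => ∑ n, p n * Z p n) := by
  refine ⟨convex_openSimplex, ?_⟩
  intro p hpD q hqD hpq a b ha hb hab
  have ⟨hp, hp1⟩ := hpD
  have ⟨hq, hq1⟩ := hqD
  have hrD := convex_openSimplex hpD hqD ha.le hb.le hab
  have hr₀ : 1 - ∑ l, (a • p + b • q) l = a * (1 - ∑ l, p l) + b * (1 - ∑ l, q l) := by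
    rw [sum_smul_add_smul]; linear_combination -hab
  have hgap : ∀ n, _ := fun n => lowerEnvelope_concavity_gap (hS n) (hne n) (hpos n) ha hb
    (hp n) (hq n) (by linarith) (by linarith) (hZ p hpD n) (hZ q hqD n)
    (by rw [hZ _ hrD n, hr₀]; rfl)
  obtain ⟨n₀, hn₀⟩ : ∃ n, p n / (1 - ∑ l, p l) ≠ q n / (1 - ∑ l, q l) := by
    by_contra! h
    exact hpq (eq_of_div_one_sub_sum_eq hp1 hq1 h)
  simp only [smul_eq_mul, Finset.mul_sum]
  rw [← Finset.sum_add_distrib]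
  exact Finset.sum_lt_sum (fun n _ => (hgap n).1) ⟨n₀, Finset.mem_univ _, (hgap n₀).2 hn₀⟩

end Simplex

section Homogeneous

variable {ι : Type*} {G : (ι → ℝ) → ℝ}

lemma isOpen_setOf_forall_pos [Finite ι] : IsOpen {Y : ι → ℝ | ∀ i, 0 < Y i} := by
  simpa only [ofPred_forall] using
    isOpen_iInter_of_finite fun i => isOpen_lt continuous_const (continuous_apply i)

lemma fderiv_apply_self_of_homogeneous [Fintype ι] {Y : ι → ℝ} (hG : DifferentiableAt ℝ G Y)
    (hhom : ∀ lam : ℝ, 0 < lam → G (lam • Y) = lam * G Y) : fderiv ℝ G Y Y = G Y := by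
  have hG' : HasFDerivAt G (fderiv ℝ G Y) ((1 : ℝ) • Y) := by
    rw [one_smul]; exact hG.hasFDerivAt
  have hchain : HasDerivAt (fun lam : ℝ => G (lam • Y)) (fderiv ℝ G Y ((1 : ℝ) • Y)) 1 :=
    hG'.comp_hasDerivAt (1 : ℝ) ((hasDerivAt_id (1 : ℝ)).smul_const Y)
  rw [one_smul] at hchain
  have hlin : HasDerivAt (fun lam : ℝ => lam * G Y) (G Y) 1 := by
    simpa using (hasDerivAt_id (1 : ℝ)).mul_const (G Y)
  have hray : (fun lam : ℝ => G (lam • Y)) =ᶠ[𝓝 1] fun lam => lam * G Y := by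
    filter_upwards [lt_mem_nhds one_pos] with lam hlam using hhom lam hlam
  exact hchain.unique (hlin.congr_of_eventuallyEq hray)

lemma pos_of_homogeneous_of_fderiv_pos [Fintype ι] [Nonempty ι] [DecidableEq ι] {Y : ι → ℝ}
    (hY : ∀ i, 0 < Y i) (hG : DifferentiableAt ℝ G Y)
    (hhom : ∀ lam : ℝ, 0 < lam → G (lam • Y) = lam * G Y)
    (hd1 : ∀ i, 0 < fderiv ℝ G Y (Pi.single i 1)) : 0 < G Y := by
  have hsum : fderiv ℝ G Y Y = ∑ i, Y i * fderiv ℝ G Y (Pi.single i 1) := by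
    rw [congrArg (fderiv ℝ G Y) (pi_eq_sum_univ' Y)]
    simp only [map_sum, map_smul, smul_eq_mul]
  rw [← fderiv_apply_self_of_homogeneous hG hhom, hsum]
  exact Finset.sum_pos (fun i _ => mul_pos (hY i) (hd1 i)) Finset.univ_nonempty

lemma homogeneous_apply_exp_shift
    (hhom : ∀ lam : ℝ, 0 < lam → ∀ Y : ι → ℝ, (∀ i, 0 < Y i) → G (lam • Y) = lam * G Y)
    {a b : ι → ℝ} {β : ℝ} (hb : ∀ i, b i = β) (c : ι → ℝ) (z : ℝ) :
    G (fun i => exp (a i - b i * (z + c i))) =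
      exp (-(β * z)) * G (fun i => exp (a i - b i * c i)) := by
  rw [← hhom _ (exp_pos _) _ fun i => exp_pos _]
  congr 1
  funext i
  rw [Pi.smul_apply, smul_eq_mul, ← exp_add, hb]
  congr 1
  ring

end Homogeneous

lemma exists_sInf_eq_exp_lowerEnvelope {ι : Type*} [Fintype ι] [Nonempty ι]
    {G : (ι → ℝ) → ℝ} (hGcont : ContinuousOn G {Y | ∀ i, 0 < Y i})
    (hGpos : ∀ Y : ι → ℝ, (∀ i, 0 < Y i) → 0 < G Y)
    (hGhom : ∀ lam : ℝ, 0 < lam → ∀ Y : ι → ℝ, (∀ i, 0 < Y i) → G (lam • Y) = lam * G Y)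
    {A : Set ((ι → ℝ) × (ι → ℝ))} (hAne : A.Nonempty) (hAcomp : IsCompact A)
    (hAb : ∀ ab ∈ A, ∃ β : ℝ, 0 < β ∧ ∀ i, ab.2 i = β) (c : ι → ℝ) :
    ∃ S : Set (ℝ × ℝ), IsCompact S ∧ S.Nonempty ∧ (∀ x ∈ S, 0 < x.2) ∧ ∀ z,
      sInf ((fun ab : (ι → ℝ) × (ι → ℝ) => G fun i => exp (ab.1 i - ab.2 i * (z + c i))) '' A) =
        exp (lowerEnvelope S z) := by
  obtain ⟨i₀⟩ := ‹Nonempty ι›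
  set K : (ι → ℝ) × (ι → ℝ) → ℝ := fun ab => G fun i => exp (ab.1 i - ab.2 i * c i)
  have hKpos : ∀ ab, 0 < K ab := fun ab => hGpos _ fun i => exp_pos _
  have hKcont : Continuous K := hGcont.comp_continuous (by fun_prop) fun ab i => exp_pos _
  -- `ab` gives the line `z ↦ log K(ab) - β z`, where `β = ab.2 i₀` is the common value of `ab.2`
  set P : (ι → ℝ) × (ι → ℝ) → ℝ × ℝ := fun ab => (log (K ab), ab.2 i₀)
  have hP : Continuous P := (hKcont.log fun ab => (hKpos ab).ne').prodMk (by fun_prop)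
  have hslope : ∀ ab ∈ A, ∀ i, ab.2 i = ab.2 i₀ := fun ab hab i => by
    obtain ⟨β, -, hβ⟩ := hAb ab hab
    rw [hβ, hβ]
  refine ⟨P '' A, hAcomp.image hP, hAne.image P, ?_, fun z => ?_⟩
  · rintro _ ⟨ab, hab, rfl⟩
    obtain ⟨β, hβ, hβi⟩ := hAb ab hab
    simpa only [P, hβi] using hβ
  have himage : (fun ab : (ι → ℝ) × (ι → ℝ) => G fun i => exp (ab.1 i - ab.2 i * (z + c i))) '' A
      = exp '' ((fun x : ℝ × ℝ => x.1 - x.2 * z) '' (P '' A)) := by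
    rw [image_image, image_image]
    refine image_congr fun ab hab => ?_
    rw [homogeneous_apply_exp_shift hGhom (hslope ab hab) c z, exp_sub, exp_log (hKpos ab),
      exp_neg]
    ring
  rw [himage, lowerEnvelope]
  exact (Monotone.map_csInf_of_continuousAt continuous_exp.continuousAt exp_monotone
    ((hAne.image P).image _) ((hAcomp.image hP).image (by fun_prop)).bddBelow).symm

theorem stmt_8_general
    (m N : ℕ)
    (part : Fin m → Fin N) (hpart : ∀ n : Fin N, ∃ i, part i = n)
    (Gn : ∀ n : Fin N, ({i : Fin m // part i = n} → ℝ) → ℝ)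
    (hGsmooth : ∀ n, ContDiffOn ℝ 2 (Gn n)
      {Y : {i : Fin m // part i = n} → ℝ | ∀ i, 0 < Y i})
    (hGhom : ∀ n, ∀ lam : ℝ, 0 < lam → ∀ Y : {i : Fin m // part i = n} → ℝ,
      (∀ i, 0 < Y i) → Gn n (lam • Y) = lam * Gn n Y)
    (hGd1 : ∀ n, ∀ Y : {i : Fin m // part i = n} → ℝ, (∀ i, 0 < Y i) →
      ∀ i, 0 < fderiv ℝ (Gn n) Y (Pi.single i 1))
    (An : ∀ n : Fin N,
      Set (({i : Fin m // part i = n} → ℝ) × ({i : Fin m // part i = n} → ℝ)))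
    (hAne : ∀ n, (An n).Nonempty)
    (hAcomp : ∀ n, IsCompact (An n))
    (hAb : ∀ n, ∀ ab ∈ An n, ∃ β : ℝ, 0 < β ∧ ∀ i, ab.2 i = β)
    (c : Fin m → ℝ) :
    (∀ p : Fin N → ℝ, (∀ n, 0 < p n) → (∑ n, p n) < 1 →
      ∃! z : Fin N → ℝ, ∀ n,
        ghatP m N part Gn c An n (z n) = p n / (1 - ∑ l, p l)) ∧
    (∀ Z : (Fin N → ℝ) → Fin N → ℝ,
      (∀ p : Fin N → ℝ, (∀ n, 0 < p n) → (∑ n, p n) < 1 →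
        ∀ n, ghatP m N part Gn c An n (Z p n) = p n / (1 - ∑ l, p l)) →
      (∀ p : Fin N → ℝ, (∀ n, 0 < p n) → (∑ n, p n) < 1 →
        ∀ n, p n = ghatP m N part Gn c An n (Z p n) /
          (1 + ∑ l, ghatP m N part Gn c An l (Z p l))) ∧
      StrictConcaveOn ℝ
        {p : Fin N → ℝ | (∀ n, 0 < p n) ∧ (∑ n, p n) < 1}
        (fun p : Fin N → ℝ => ∑ n, p n * Z p n)) := by
  have hS : ∀ n, ∃ S : Set (ℝ × ℝ), IsCompact S ∧ S.Nonempty ∧ (∀ x ∈ S, 0 < x.2) ∧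
      ∀ z, ghatP m N part Gn c An n z = exp (lowerEnvelope S z) := fun n => by
    obtain ⟨i, hi⟩ := hpart n
    have : Nonempty {i // part i = n} := ⟨⟨i, hi⟩⟩
    refine exists_sInf_eq_exp_lowerEnvelope (hGsmooth n).continuousOn (fun Y hY => ?_) (hGhom n)
      (hAne n) (hAcomp n) (hAb n) (fun i => c i.1)
    have hdiff := (hGsmooth n).differentiableOn (by norm_num)
      |>.differentiableAt (isOpen_setOf_forall_pos.mem_nhds hY)
    exact pos_of_homogeneous_of_fderiv_pos hY hdiff (fun lam hlam => hGhom n lam hlam Y hY)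
      (hGd1 n Y hY)
  choose S hScomp hSne hSpos hg using hS
  have hlog : ∀ n z t, 0 < t →
      (ghatP m N part Gn c An n z = t ↔ lowerEnvelope (S n) z = log t) :=
    fun n z t ht => by rw [hg, ← exp_log ht, exp_eq_exp, log_exp]
  refine ⟨fun p hp hp1 => ?_, fun Z hZ => ⟨fun p hp hp1 n => ?_, ?_⟩⟩
  · have hodds : ∀ n, 0 < p n / (1 - ∑ l, p l) := fun n => div_pos (hp n) (by linarith)
    choose z hz using fun n =>
      lowerEnvelope_surjective (hScomp n) (hSne n) (hSpos n) (log (p n / (1 - ∑ l, p l)))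
    refine ⟨z, fun n => (hlog n _ _ (hodds n)).2 (hz n), fun y hy => funext fun n => ?_⟩
    exact (lowerEnvelope_strictAnti (hScomp n) (hSne n) (hSpos n)).injective
      (((hlog n _ _ (hodds n)).1 (hy n)).trans (hz n).symm)
  · simp only [hZ p hp hp1]
    exact eq_div_one_add_sum_div hp1 n
  · refine strictConcaveOn_sum_mul_of_lowerEnvelope_eq_log hScomp hSne hSpos
      fun p ⟨hp, hp1⟩ n => ?_
    exact (hlog n _ _ (div_pos (hp n) (by linarith))).1 (hZ p hp hp1 n)

/-- For every `p` in the open simplex `P^G` there is a unique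
`z(p)` with `ĝ_n(z(p)_n) = p_n/(1 − Σ_l p_l)` for all `n`; it satisfies
`p_n = ĝ_n(z(p)_n)/(1 + Σ_l ĝ_l(z(p)_l))`, and `p ↦ Σ_n p_n z(p)_n` is strictly
concave on `P^G`. -/
theorem stmt_8
    (m N : ℕ) (hN : 1 ≤ N)
    (part : Fin m → Fin N) (hpart : ∀ n : Fin N, ∃ i, part i = n)
    (Gn : ∀ n : Fin N, ({i : Fin m // part i = n} → ℝ) → ℝ)
    (hGnonneg : ∀ n, ∀ Y : {i : Fin m // part i = n} → ℝ,
      (∀ i, 0 < Y i) → 0 ≤ Gn n Y)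
    (hGsmooth : ∀ n, ContDiffOn ℝ 2 (Gn n)
      {Y : {i : Fin m // part i = n} → ℝ | ∀ i, 0 < Y i})
    (hGhom : ∀ n, ∀ lam : ℝ, 0 < lam → ∀ Y : {i : Fin m // part i = n} → ℝ,
      (∀ i, 0 < Y i) → Gn n (lam • Y) = lam * Gn n Y)
    (hGd1 : ∀ n, ∀ Y : {i : Fin m // part i = n} → ℝ, (∀ i, 0 < Y i) →
      ∀ i, 0 < fderiv ℝ (Gn n) Y (Pi.single i 1))
    (hGd2 : ∀ n, ∀ Y : {i : Fin m // part i = n} → ℝ, (∀ i, 0 < Y i) →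
      ∀ i j, i ≠ j →
        fderiv ℝ (fun W => fderiv ℝ (Gn n) W (Pi.single i 1)) Y (Pi.single j 1) ≤ 0)
    (An : ∀ n : Fin N,
      Set (({i : Fin m // part i = n} → ℝ) × ({i : Fin m // part i = n} → ℝ)))
    (hAne : ∀ n, (An n).Nonempty) (hAconv : ∀ n, Convex ℝ (An n))
    (hAcomp : ∀ n, IsCompact (An n))
    (hAb : ∀ n, ∀ ab ∈ An n, ∃ β : ℝ, 0 < β ∧ ∀ i, ab.2 i = β)
    (c : Fin m → ℝ) (hc : ∀ i, 0 ≤ c i) :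
    (∀ p : Fin N → ℝ, (∀ n, 0 < p n) → (∑ n, p n) < 1 →
      ∃! z : Fin N → ℝ, ∀ n,
        ghatP m N part Gn c An n (z n) = p n / (1 - ∑ l, p l)) ∧
    (∀ Z : (Fin N → ℝ) → Fin N → ℝ,
      (∀ p : Fin N → ℝ, (∀ n, 0 < p n) → (∑ n, p n) < 1 →
        ∀ n, ghatP m N part Gn c An n (Z p n) = p n / (1 - ∑ l, p l)) →
      (∀ p : Fin N → ℝ, (∀ n, 0 < p n) → (∑ n, p n) < 1 →
        ∀ n, p n = ghatP m N part Gn c An n (Z p n) /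
          (1 + ∑ l, ghatP m N part Gn c An l (Z p l))) ∧
      StrictConcaveOn ℝ
        {p : Fin N → ℝ | (∀ n, 0 < p n) ∧ (∑ n, p n) < 1}
        (fun p : Fin N → ℝ => ∑ n, p n * Z p n)) :=
  stmt_8_general m N part hpart Gn hGsmooth hGhom hGd1 An hAne hAcomp hAb c
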